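/- Let $p$ be a prime, let $g$ be an integer with $\gcd(g,p)=1$, and let $n$ be the multiplicative order of $g$ modulo $p$. If $n \equiv 1 \pmod 4$, then $Q(g,p)^2 \equiv n \pmod p$, where $Q(g,p) = \sum_{k=1}^{n} g^{k^2} \pmod p$. -/

import Mathlib

/-!
Write `ζ` for the class of `g`, of odd order `m`, and `S(ζ, m) = ∑_{k<m} ζ^{k²}`. In any domain
of characteristic `≠ 2`, `S(ζ, m)² = χ₄(m) m`, with `χ₄(m) = (-1)^{(m-1)/2}`; for `m ≡ 1 mod 4`
this is the theorem. For `m` prime, `S` is the Gauss sum of the quadratic character against the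
additive character `k ↦ ζ^k`, whose square is classical. If `d² ∣ m`, splitting
`k = (m/d) j + i` and summing the geometric series in `j` kills every `i` not divisible by `d`,
so `S(ζ, d² r) = d S(ζ^{d²}, r)`. If `m = m₁ m₂` with coprime factors, the Chinese remainder
theorem splits `S` into sums for elements of orders `m₁` and `m₂`. Induction on `m` combines the
three cases.
-/

/-- The quadratic Gauss-type sum `Q(g,p) = ∑_{k=1}^{n} g^{k²} (mod p)`, where `n` is the
multiplicative order of `g` modulo `p`. -/
def quadGaussSum (p : ℕ) (g : ℤ) (n : ℕ) : ZMod p :=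
  ∑ k ∈ Finset.Icc 1 n, (g : ZMod p) ^ (k ^ 2)

open Finset

theorem Finset.sum_range_mul_eq_sum_sum {M : Type*} [AddCommMonoid M] (f : ℕ → M) (a b : ℕ) :
    ∑ k ∈ range (a * b), f k = ∑ i ∈ range a, ∑ j ∈ range b, f (a * j + i) := by
  induction b with
  | zero => simp
  | succ b ih =>
    simp only [Nat.mul_succ, sum_range_add, ih, sum_range_succ, sum_add_distrib]

theorem Finset.sum_Icc_one_eq_sum_range {M : Type*} [AddCancelCommMonoid M] {f : ℕ → M} {n : ℕ}
    (hf : f n = f 0) : ∑ k ∈ Icc 1 n, f k = ∑ k ∈ range n, f k := by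
  have h := (sum_range_succ f n).symm.trans (sum_range_succ' f n)
  rw [hf, add_left_inj] at h
  rw [h, ← Ico_add_one_right_eq_Icc, sum_Ico_eq_sum_range]
  simp [add_comm]

theorem ZMod.sum_univ_eq_sum_range {M : Type*} [AddCommMonoid M] {m : ℕ} [NeZero m]
    (f : ZMod m → M) :
    ∑ x, f x = ∑ k ∈ range m, f k :=
  sum_nbij' ZMod.val (↑) (fun x _ => mem_range.mpr x.val_lt) (fun _ _ => mem_univ _)
    (fun x _ => by simp) (fun k hk => by simp [Nat.mod_eq_of_lt (mem_range.mp hk)])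
    (fun x _ => by simp)

theorem geom_sum_eq_zero_of_pow_eq_one {R : Type*} [CommRing R] [IsDomain R] {x : R} {n : ℕ}
    (hx : x ^ n = 1) (hx1 : x ≠ 1) : ∑ j ∈ range n, x ^ j = 0 := by
  have hmul := geom_sum_mul x n
  rw [hx, sub_self] at hmul
  exact (mul_eq_zero.mp hmul).resolve_right (sub_ne_zero.mpr hx1)

theorem ZMod.χ₄_nat_sq_eq_one_of_odd {d : ℕ} (hd : Odd d) : χ₄ d ^ 2 = 1 := by
  rw [χ₄_eq_neg_one_pow (Nat.odd_iff.mp hd), ← pow_mul, mul_comm, pow_mul, neg_one_sq, one_pow]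

theorem AddChar.zmodChar_injective {R : Type*} [CommMonoid R] {m : ℕ} [NeZero m] {ζ : R}
    (hζ : orderOf ζ = m) :
    Function.Injective (zmodChar m (hζ ▸ pow_orderOf_eq_one ζ)) := by
  intro x y hxy
  rw [zmodChar_apply, zmodChar_apply] at hxy
  exact ZMod.val_injective m ((hζ ▸ IsPrimitiveRoot.orderOf ζ).pow_inj x.val_lt y.val_lt hxy)

theorem AddChar.orderOf_apply_one {M : Type*} [Monoid M] {m : ℕ} {ψ : AddChar (ZMod m) M}
    (hψ : Function.Injective ψ) : orderOf (ψ 1) = m := by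
  calc orderOf (ψ 1) = orderOf (Multiplicative.ofAdd (1 : ZMod m)) :=
        orderOf_injective ψ.toMonoidHom hψ _
    _ = m := by rw [orderOf_ofAdd_eq_addOrderOf, ZMod.addOrderOf_one]

section GaussSum

variable {F R : Type*} [Field F] [Fintype F] [DecidableEq F] [CommRing R] [IsDomain R]

theorem sum_addChar_sq_eq_gaussSum (hF : ringChar F ≠ 2) {ψ : AddChar F R} (hψ : ψ ≠ 1) :
    ∑ x, ψ (x ^ 2) = gaussSum ((quadraticChar F).ringHomComp (Int.castRingHom R)) ψ := by
  have hfiber : ∀ a : F, ∑ x with x ^ 2 = a, ψ (x ^ 2) = (quadraticChar F a + 1 : ℤ) • ψ a := by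
    intro a
    rw [sum_congr rfl fun x hx => by rw [(mem_filter.mp hx).2], sum_const,
      ← quadraticChar_card_sqrts hF a, Set.toFinset_ofPred, natCast_zsmul]
  rw [← sum_fiberwise univ (· ^ 2), sum_congr rfl fun a _ => hfiber a]
  simp [add_smul, sum_add_distrib, AddChar.sum_eq_zero_of_ne_one hψ, gaussSum]

theorem sum_addChar_sq_sq (hF : ringChar F ≠ 2) (hR : ringChar R ≠ 2) {ψ : AddChar F R}
    (hψ : ψ.IsPrimitive) :
    (∑ x, ψ (x ^ 2)) ^ 2 = quadraticChar F (-1) * Fintype.card F := by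
  set χ := (quadraticChar F).ringHomComp (Int.castRingHom R)
  have hχ : χ ≠ 1 := by
    obtain ⟨a, ha⟩ := quadraticChar_exists_neg_one' hF
    refine MulChar.ne_one_iff.mpr ⟨a, ?_⟩
    simpa [χ, ha] using Ring.neg_one_ne_one_of_char_ne_two hR
  have hψ1 : ψ ≠ 1 := by simpa using hψ one_ne_zero
  rw [sum_addChar_sq_eq_gaussSum hF hψ1,
    gaussSum_sq hχ ((quadraticChar_isQuadratic F).comp _) hψ]
  rfl

end GaussSum

section QuadSum

variable {R : Type*} [CommRing R]

def quadSum (ζ : R) (m : ℕ) : R := ∑ k ∈ range m, ζ ^ (k ^ 2)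

theorem quadSum_one (ζ : R) : quadSum ζ 1 = 1 := by simp [quadSum]

theorem sum_addChar_sq_eq_quadSum {m : ℕ} [NeZero m] (ψ : AddChar (ZMod m) R) :
    ∑ x, ψ (x ^ 2) = quadSum (ψ 1) m := by
  rw [ZMod.sum_univ_eq_sum_range]
  refine sum_congr rfl fun k _ => ?_
  rw [← Nat.cast_pow, ← nsmul_one, AddChar.map_nsmul_eq_pow]

theorem quadSum_eq_sum_zmodChar {m : ℕ} [NeZero m] {ζ : R} (hζ : ζ ^ m = 1) :
    quadSum ζ m = ∑ x, AddChar.zmodChar m hζ (x ^ 2) := by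
  rw [sum_addChar_sq_eq_quadSum]
  simpa using congrArg (quadSum · m) (AddChar.zmodChar_apply' hζ 1).symm

theorem exists_quadSum_mul_eq_mul {m₁ m₂ : ℕ} [NeZero m₁] [NeZero m₂] (hcop : m₁.Coprime m₂)
    {ζ : R} (hζ : orderOf ζ = m₁ * m₂) :
    ∃ ξ₁ ξ₂ : R, orderOf ξ₁ = m₁ ∧ orderOf ξ₂ = m₂ ∧
      quadSum ζ (m₁ * m₂) = quadSum ξ₁ m₁ * quadSum ξ₂ m₂ := by
  have hζm : ζ ^ (m₁ * m₂) = 1 := hζ ▸ pow_orderOf_eq_one ζ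
  set ψ := AddChar.zmodChar (m₁ * m₂) hζm
  have hψ : Function.Injective ψ := AddChar.zmodChar_injective hζ
  set e := ZMod.chineseRemainder hcop
  set ψ₁ := ψ.compAddMonoidHom (e.symm.toAddMonoidHom.comp (AddMonoidHom.inl _ _))
  set ψ₂ := ψ.compAddMonoidHom (e.symm.toAddMonoidHom.comp (AddMonoidHom.inr _ _))
  have hψ₁ : Function.Injective ψ₁ := hψ.comp (e.symm.injective.comp (Prod.mk_left_injective 0))
  have hψ₂ : Function.Injective ψ₂ := hψ.comp (e.symm.injective.comp (Prod.mk_right_injective 0))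
  have hsplit (x : ZMod (m₁ * m₂)) : ψ (x ^ 2) = ψ₁ ((e x).1 ^ 2) * ψ₂ ((e x).2 ^ 2) := by
    simp only [ψ₁, ψ₂, AddChar.compAddMonoidHom_apply, ← AddChar.map_add_eq_mul]
    congr 1
    apply e.injective
    simp [Prod.pow_def]
  refine ⟨ψ₁ 1, ψ₂ 1, AddChar.orderOf_apply_one hψ₁, AddChar.orderOf_apply_one hψ₂, ?_⟩
  rw [quadSum_eq_sum_zmodChar hζm, ← sum_addChar_sq_eq_quadSum, ← sum_addChar_sq_eq_quadSum,
    sum_mul_sum, ← Fintype.sum_prod_type']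
  exact Fintype.sum_equiv e.toEquiv _ _ hsplit

variable [IsDomain R]

theorem quadSum_sq_of_prime (hR : ringChar R ≠ 2) {q : ℕ} (hq : q.Prime) (hq2 : q ≠ 2)
    {ζ : R} (hζ : orderOf ζ = q) :
    quadSum ζ q ^ 2 = ZMod.χ₄ q * q := by
  have : Fact q.Prime := ⟨hq⟩
  have hζq : ζ ^ q = 1 := hζ ▸ pow_orderOf_eq_one ζ
  have hprim := AddChar.zmodChar_primitive_of_primitive_root q (hζ ▸ IsPrimitiveRoot.orderOf ζ)
  rw [quadSum_eq_sum_zmodChar hζq, sum_addChar_sq_sq (by rwa [ZMod.ringChar_zmod_n]) hR hprim,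
    quadraticChar_neg_one (by rwa [ZMod.ringChar_zmod_n]), ZMod.card]

theorem sum_range_pow_sq_mul_add {d n : ℕ} (hd : Odd d) {ζ : R} (hζn : ζ ^ (n * n) = 1)
    (hω : orderOf (ζ ^ n) = d) (i : ℕ) :
    ∑ j ∈ range d, ζ ^ ((n * j + i) ^ 2) = if d ∣ i then d * ζ ^ (i ^ 2) else 0 := by
  have hpow : (ζ ^ n) ^ (2 * i) = 1 ↔ d ∣ i := by
    rw [← orderOf_dvd_iff_pow_eq_one, hω]
    exact (Nat.coprime_two_right.mpr hd).dvd_mul_left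
  have hroot : ((ζ ^ n) ^ (2 * i)) ^ d = 1 := by
    rw [← pow_mul, mul_comm, pow_mul, ← hω, pow_orderOf_eq_one, one_pow]
  calc ∑ j ∈ range d, ζ ^ ((n * j + i) ^ 2)
      = ζ ^ (i ^ 2) * ∑ j ∈ range d, ((ζ ^ n) ^ (2 * i)) ^ j := by
        rw [mul_sum]
        refine sum_congr rfl fun j _ => ?_
        rw [show (n * j + i) ^ 2 = i ^ 2 + n * (2 * i) * j + n * n * j ^ 2 by ring,
          pow_add, pow_add, pow_mul ζ (n * n), hζn, one_pow, mul_one, pow_mul, pow_mul]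
    _ = if d ∣ i then d * ζ ^ (i ^ 2) else 0 := by
        split_ifs with hdi
        · rw [hpow.mpr hdi]
          simp [mul_comm]
        · rw [geom_sum_eq_zero_of_pow_eq_one hroot (mt hpow.mp hdi), mul_zero]

theorem quadSum_sq_mul {d r : ℕ} (hd : Odd d) {ζ : R} (hζ : orderOf ζ = d ^ 2 * r) :
    quadSum ζ (d ^ 2 * r) = d * quadSum (ζ ^ d ^ 2) r := by
  rcases Nat.eq_zero_or_pos r with rfl | hr
  · simp [quadSum]
  set n := d * r
  have hn : 0 < n := Nat.mul_pos hd.pos hr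
  have hζn : ζ ^ (n * n) = 1 := by
    rw [show n * n = d ^ 2 * r * r by ring, pow_mul, ← hζ, pow_orderOf_eq_one, one_pow]
  have hω : orderOf (ζ ^ n) = d := by
    rw [orderOf_pow_of_dvd hn.ne' (hζ ▸ Dvd.intro_left _ (by ring)), hζ,
      show d ^ 2 * r = d * n by ring, Nat.mul_div_cancel _ hn]
  calc quadSum ζ (d ^ 2 * r)
      = ∑ i ∈ range n, if d ∣ i then d * ζ ^ (i ^ 2) else 0 := by
        rw [quadSum, show d ^ 2 * r = n * d by ring, sum_range_mul_eq_sum_sum]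
        exact sum_congr rfl fun i _ => sum_range_pow_sq_mul_add hd hζn hω i
    _ = ∑ s ∈ range d, ∑ t ∈ range r, if d ∣ d * t + s then d * ζ ^ ((d * t + s) ^ 2) else 0 :=
        sum_range_mul_eq_sum_sum _ d r
    _ = ∑ t ∈ range r, d * ζ ^ ((d * t) ^ 2) := by
        rw [sum_eq_single_of_mem 0 (mem_range.mpr hd.pos)]
        · simp
        · intro s hs hs0
          refine sum_eq_zero fun t _ => if_neg ?_
          rw [Nat.dvd_add_right (dvd_mul_right d t)]
          exact fun hdvd => hs0 (Nat.eq_zero_of_dvd_of_lt hdvd (mem_range.mp hs))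
    _ = d * quadSum (ζ ^ d ^ 2) r := by
        rw [quadSum, mul_sum]
        exact sum_congr rfl fun t _ => by rw [mul_pow, pow_mul]

theorem quadSum_sq_of_odd (hR : ringChar R ≠ 2) {m : ℕ} (hm : Odd m) {ζ : R}
    (hζ : orderOf ζ = m) :
    quadSum ζ m ^ 2 = ZMod.χ₄ m * m := by
  induction m using Nat.strong_induction_on generalizing ζ with
  | _ m ih =>
  rcases eq_or_ne m 1 with rfl | hm1
  · simp [quadSum_one]
  obtain ⟨q, hq, hqm⟩ : ∃ q, q.Prime ∧ q ∣ m :=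
    ⟨m.minFac, Nat.minFac_prime hm1, Nat.minFac_dvd m⟩
  have hq2 : q ≠ 2 := hm.ne_two_of_dvd_nat hqm
  have hqodd : Odd q := hm.of_dvd_nat hqm
  obtain ⟨r, rfl⟩ := hqm
  have hrodd : Odd r := hm.of_dvd_nat (dvd_mul_left r q)
  by_cases hqr : q ∣ r
  · obtain ⟨s, rfl⟩ := hqr
    have hsodd : Odd s := hrodd.of_dvd_nat (dvd_mul_left s q)
    have hs : s < q * (q * s) :=
      (lt_mul_left hsodd.pos hq.one_lt).trans_le (Nat.le_mul_of_pos_left _ hq.pos)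
    rw [show q * (q * s) = q ^ 2 * s by ring] at hζ ⊢
    have hζs : orderOf (ζ ^ q ^ 2) = s := by
      rw [orderOf_pow_of_dvd (pow_pos hq.pos 2).ne' (hζ ▸ dvd_mul_right _ _), hζ,
        Nat.mul_div_cancel_left _ (pow_pos hq.pos 2)]
    rw [quadSum_sq_mul hqodd hζ, mul_pow, ih s hs hsodd hζs]
    push_cast [map_mul, map_pow, ZMod.χ₄_nat_sq_eq_one_of_odd hqodd]
    ring
  · have : NeZero q := ⟨hq.ne_zero⟩
    have : NeZero r := ⟨hrodd.pos.ne'⟩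
    obtain ⟨ξ₁, ξ₂, hξ₁, hξ₂, hsplit⟩ :=
      exists_quadSum_mul_eq_mul ((Nat.Prime.coprime_iff_not_dvd hq).mpr hqr) hζ
    have hr : r < q * r := lt_mul_left hrodd.pos hq.one_lt
    rw [hsplit, mul_pow, quadSum_sq_of_prime hR hq hq2 hξ₁, ih r hr hrodd hξ₂]
    push_cast [map_mul]
    ring

end QuadSum

theorem quadGaussSum_eq_quadSum {p : ℕ} {g : ℤ} {n : ℕ} (hn : (g : ZMod p) ^ n = 1) :
    quadGaussSum p g n = quadSum (g : ZMod p) n := by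
  refine sum_Icc_one_eq_sum_range ?_
  rw [sq, pow_mul, hn, one_pow, zero_pow two_ne_zero, pow_zero]

theorem quadGaussSum_sq_of_order_one_mod_four_general (p : ℕ) (hp : p.Prime)
    (g : ℤ)
    (n : ℕ) (hn : n = orderOf ((g : ZMod p))) (hn4 : n % 4 = 1) :
    (quadGaussSum p g n) ^ 2 = (n : ZMod p) := by
  have : Fact p.Prime := ⟨hp⟩
  rw [quadGaussSum_eq_quadSum (hn ▸ pow_orderOf_eq_one _)]
  rcases hp.eq_two_or_odd' with rfl | hpodd
  · have hg : (g : ZMod 2) = 1 := by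
      rcases Int.even_or_odd g with hg | hg
      · simp [hg.intCast_zmod_two] at hn
        omega
      · exact hg.intCast_zmod_two
    have h1 : n = 1 := by rw [hn, hg, orderOf_one]
    simp [h1, hg, quadSum_one]
  · rw [quadSum_sq_of_odd (by rw [ZMod.ringChar_zmod_n]; exact hpodd.ne_two_of_dvd_nat dvd_rfl)
      (Nat.odd_iff.mpr (Nat.odd_of_mod_four_eq_one hn4)) hn.symm, ZMod.χ₄_nat_one_mod_four hn4,
      Int.cast_one, one_mul]

/-- If `n`, the multiplicative order of `g` mod `p`, satisfies `n ≡ 1 (mod 4)`,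
then `Q(g,p)² ≡ n (mod p)`. -/
theorem quadGaussSum_sq_of_order_one_mod_four (p : ℕ) (hp : p.Prime)
    (g : ℤ) (hg : Int.gcd g p = 1)
    (n : ℕ) (hn : n = orderOf ((g : ZMod p))) (hn4 : n % 4 = 1) :
    (quadGaussSum p g n) ^ 2 = (n : ZMod p) :=
  quadGaussSum_sq_of_order_one_mod_four_general p hp g n hn hn4
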